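/- arXiv:0910.2166 — 4 statements merged into one kernel-verified Lean document; each statement's English description precedes it below -/
import Mathlib

section
/- If (A, R) is an associative Rota–Baxter algebra of weight θ, then the product a ▷_R b := R(a)b - bR(a) - θba is a left pre-Lie product, i.e. (a ▷ b) ▷ c - a ▷ (b ▷ c) = (b ▷ a) ▷ c - b ▷ (a ▷ c). -/
/-- A Rota–Baxter operator of weight θ on a k-algebra A. -/
def IsRotaBaxter {k A : Type*} [CommRing k] [Ring A] [Algebra k A]
    (θ : k) (R : A →ₗ[k] A) : Prop :=
  ∀ a b : A, R a * R b = R (R a * b + a * R b + θ • (a * b))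

/-- The product a ▷_R b := R(a)b - bR(a) - θ·ba. -/
def rbPreLie {k A : Type*} [CommRing k] [Ring A] [Algebra k A]
    (θ : k) (R : A →ₗ[k] A) (a b : A) : A :=
  R a * b - b * R a - θ • (b * a)

/-- The product ▷_R coming from a Rota–Baxter operator is left pre-Lie. -/
theorem rbPreLie_leftPreLie {k A : Type*} [CommRing k] [Ring A] [Algebra k A]
    (θ : k) (R : A →ₗ[k] A) (hR : IsRotaBaxter θ R) (a b c : A) :
    rbPreLie θ R (rbPreLie θ R a b) c - rbPreLie θ R a (rbPreLie θ R b c) =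
      rbPreLie θ R (rbPreLie θ R b a) c - rbPreLie θ R b (rbPreLie θ R a c) := by
  simp only [rbPreLie, map_sub, map_smul, sub_mul, mul_sub, smul_sub,
    mul_smul_comm, smul_mul_assoc, smul_smul, ← mul_assoc]
  rw [hR a b, hR b a, mul_assoc c (R b) (R a), mul_assoc c (R a) (R b), hR b a, hR a b]
  simp only [map_add, map_smul, mul_add, add_mul, sub_mul, mul_sub, smul_sub, smul_add,
    mul_smul_comm, smul_mul_assoc, smul_smul, ← mul_assoc, mul_comm θ θ]
  abel
end

section
/- In a twisted dendriform algebra (D, ≺, ≻, Φ), the product x * y := x ≻ y + x ≺ Φ(y) is associative, and Φ is an algebra automorphism for *. -/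
/-- A twisted dendriform algebra: two bilinear operations ≺ and ≻ together
with a linear automorphism Φ satisfying the twisted dendriform axioms, where
the associative product is x * y = x ≻ y + x ≺ Φ(y). -/
structure TwistedDendriform (k D : Type*) [CommRing k] [AddCommGroup D] [Module k D] where
  prec : D →ₗ[k] D →ₗ[k] D
  succ : D →ₗ[k] D →ₗ[k] D
  phi : D ≃ₗ[k] D
  phi_prec : ∀ x y : D, phi (prec x y) = prec (phi x) (phi y)
  phi_succ : ∀ x y : D, phi (succ x y) = succ (phi x) (phi y)
  ax1 : ∀ x y z : D, prec (prec x y) z = prec x (succ y z + prec y (phi z))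
  ax2 : ∀ x y z : D, prec (succ x y) z = succ x (prec y z)
  ax3 : ∀ x y z : D, succ x (succ y z) = succ (succ x y + prec x (phi y)) z

namespace TwistedDendriform

variable {k D : Type*} [CommRing k] [AddCommGroup D] [Module k D]

/-- The associative product x * y = x ≻ y + x ≺ Φ(y). -/
def mul (T : TwistedDendriform k D) (x y : D) : D :=
  T.succ x y + T.prec x (T.phi y)

/-- The left pre-Lie product x ▷ y = x ≻ y - y ≺ Φ(x). -/
def preLie (T : TwistedDendriform k D) (x y : D) : D :=
  T.succ x y - T.prec y (T.phi x)

/-- The right pre-Lie product x ◁ y = x ≺ Φ(y) - y ≻ x. -/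
def rPreLie (T : TwistedDendriform k D) (x y : D) : D :=
  T.prec x (T.phi y) - T.succ y x

end TwistedDendriform

/-- In a twisted dendriform algebra the product * is associative and Φ is an
automorphism for *. -/
theorem TwistedDendriform.mul_assoc_and_phi_hom {k D : Type*} [CommRing k]
    [AddCommGroup D] [Module k D] (T : TwistedDendriform k D) :
    (∀ x y z : D, T.mul (T.mul x y) z = T.mul x (T.mul y z)) ∧
    (∀ x y : D, T.phi (T.mul x y) = T.mul (T.phi x) (T.phi y)) := by
  constructor
  · intro x y z
    simp only [TwistedDendriform.mul, map_add, LinearMap.add_apply]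
    rw [T.ax3, T.ax2, T.ax1]
    simp only [map_add, LinearMap.add_apply, T.phi_succ, T.phi_prec]
    abel
  · intro x y
    simp only [TwistedDendriform.mul, map_add, T.phi_succ, T.phi_prec]
end

section
/- In a twisted dendriform algebra (D, ≺, ≻, Φ), the operation x ▷ y := x ≻ y - y ≺ Φ(x) is left pre-Lie: (x▷y)▷z - x▷(y▷z) = (y▷x)▷z - y▷(x▷z). -/
/-- In a twisted dendriform algebra, x ▷ y = x ≻ y - y ≺ Φ(x) is left pre-Lie. -/
theorem TwistedDendriform.preLie_left {k D : Type*} [CommRing k]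
    [AddCommGroup D] [Module k D] (T : TwistedDendriform k D) (x y z : D) :
    T.preLie (T.preLie x y) z - T.preLie x (T.preLie y z) =
      T.preLie (T.preLie y x) z - T.preLie y (T.preLie x z) := by
  simp only [preLie, map_sub, map_add, LinearMap.sub_apply, LinearMap.add_apply,
    T.phi_succ, T.phi_prec, T.ax1, T.ax2, T.ax3]
  abel
end

section
/- In a twisted dendriform algebra with unit 𝟙 (where a≺𝟙 = a = 𝟙≻a and 𝟙≺a = 0 = a≻𝟙, Φ(𝟙)=𝟙), for every n ≥ 0 and every element ω one has ∑_{p+q=n} ω^{*p} ≻ ω ≺ Φ(ω)^{*q} = ω^{*(n+1)}, where powers are taken with respect to the associative product x*y = x≻y + x≺Φ(y). -/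
namespace TwistedDendriform

variable {k D : Type*} [CommRing k] [AddCommGroup D] [Module k D]

/-- `starPow T x n` is the power x^{*(n+1)} with respect to the associative
product x * y = x ≻ y + x ≺ Φ(y). -/
def starPow (T : TwistedDendriform k D) (x : D) : ℕ → D
  | 0 => x
  | n + 1 => T.mul x (starPow T x n)

/-- The term ω^{*p} ≻ ω ≺ Φ(ω)^{*q} in the unital twisted dendriform algebra
D̄ = D ⊕ k·𝟙, expressed inside D via the unit conventions
a ≺ 𝟙 = a = 𝟙 ≻ a (so the factor with exponent 0 is omitted). -/
def sumTerm (T : TwistedDendriform k D) (x : D) : ℕ → ℕ → D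
  | 0, 0 => x
  | 0, q + 1 => T.prec x (starPow T (T.phi x) q)
  | p + 1, 0 => T.succ (starPow T x p) x
  | p + 1, q + 1 => T.prec (T.succ (starPow T x p) x) (starPow T (T.phi x) q)

lemma phi_starPow (T : TwistedDendriform k D) (x : D) (n : ℕ) :
    T.phi (T.starPow x n) = T.starPow (T.phi x) n := by
  induction n with
  | zero => rfl
  | succ n ih =>
    simp only [starPow, mul, map_add, T.phi_succ, T.phi_prec, ih]

lemma succ_sumTerm (T : TwistedDendriform k D) (x : D) (p q : ℕ) :
    T.succ x (T.sumTerm x p q) = T.sumTerm x (p + 1) q := by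
  match p, q with
  | 0, 0 => rfl
  | 0, q + 1 =>
    show T.succ x (T.prec x _) = T.prec (T.succ _ x) _
    rw [← T.ax2]
    rfl
  | p + 1, 0 =>
    show T.succ x (T.succ (T.starPow x p) x) = T.succ (T.starPow x (p + 1)) x
    rw [T.ax3]
    rfl
  | p + 1, q + 1 =>
    show T.succ x (T.prec (T.succ (T.starPow x p) x) _)
        = T.prec (T.succ (T.starPow x (p + 1)) x) _
    rw [← T.ax2, T.ax3]
    rfl

/-- ∑_{p+q=n} ω^{*p} ≻ ω ≺ Φ(ω)^{*q} = ω^{*(n+1)}. -/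
theorem sum_succ_prec_powers (T : TwistedDendriform k D) (ω : D) (n : ℕ) :
    ∑ p ∈ Finset.range (n + 1), T.sumTerm ω p (n - p) = T.starPow ω n := by
  induction n with
  | zero => simp [sumTerm]; rfl
  | succ n ih =>
    rw [Finset.sum_range_succ']
    have h1 : ∀ p ∈ Finset.range (n + 1),
        T.sumTerm ω (p + 1) (n + 1 - (p + 1)) = T.succ ω (T.sumTerm ω p (n - p)) := by
      intro p hp
      rw [succ_sumTerm]
      congr 1
      omega
    rw [Finset.sum_congr rfl h1]
    have h2 : ∑ p ∈ Finset.range (n + 1), T.succ ω (T.sumTerm ω p (n - p))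
        = T.succ ω (T.starPow ω n) := by
      rw [← ih, ← map_sum (T.succ ω) _ (Finset.range (n + 1))]
    rw [h2]
    have h3 : T.sumTerm ω 0 (n + 1 - 0) = T.prec ω (T.phi (T.starPow ω n)) := by
      show T.sumTerm ω 0 (n + 1) = _
      rw [phi_starPow]
      rfl
    rw [h3]
    rfl

end TwistedDendriform
end
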